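/- Let s, d ≥ 1, let X be a positive semidefinite d×d complex matrix, fix b, and let β_{k,j,b} ∈ ℂ^d (k, j ∈ {0,…,s−1}) be vectors satisfying: (i) ⟨β_{k,j,b}|X|β_{k',j',b}⟩ = 0 for all k ≠ k' and all j, j'; and (ii) Σ_{k=0}^{s−1} Σ_{j,j'=0}^{s−1} |j⟩⟨j'|·⟨β_{k,j,b}|X|β_{k,j',b}⟩ = p_b·I_s for some p_b ≥ 0. Then for every t ∈ {0,…,s−1}, the operator M_{b,t} = (1/s)·Σ_{j,k=0}^{s−1} e^{2πi t k/s}|j⟩⟨β_{k,j,b}| satisfies M_{b,t} X M_{b,t}† = (p_b/s²)·I_s; in particular each measurement outcome produces an operator proportional to the maximally mixed state I_s/s. -/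

import Mathlib

open Matrix Complex
open scoped Matrix ComplexOrder
noncomputable section

/-- The operator M_t = (1/s)·Σ_{j,k} e^{2πitk/s}|j⟩⟨β_{k,j}| (for a fixed outcome b). -/
def Mop {s d : ℕ} (β : Fin s → Fin s → (Fin d → ℂ)) (t : Fin s) :
    Matrix (Fin s) (Fin d) ℂ :=
  ((s : ℂ))⁻¹ • ∑ j : Fin s, ∑ k : Fin s,
    Complex.exp (2 * (Real.pi : ℂ) * I * ((t : ℕ) : ℂ) * ((k : ℕ) : ℂ) / (s : ℂ)) •
      Matrix.vecMulVec (fun r => if r = j then (1 : ℂ) else 0) (star (β k j))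

/-! Writing `B k` for the matrix whose `j`-th row is `⟨β_{k,j}|`, we have
`M_t = s⁻¹ • ∑ k, ω^{tk} • B k` with `|ω| = 1`. Hypothesis (i) says `B k X (B k')ᴴ = 0` for
`k ≠ k'`, so in `M_t X M_tᴴ` only the diagonal terms survive and the phases cancel, leaving
`s⁻² • ∑ k, B k X (B k)ᴴ`, which is `s⁻² p • 1` by hypothesis (ii). -/

namespace Matrix

variable {ι m n R : Type*} [Fintype ι] [Fintype n] [CommRing R] [StarRing R]

theorem sum_smul_mul_mul_conjTranspose_sum_smul (c : ι → R) (B : ι → Matrix m n R)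
    (X : Matrix n n R) (hc : ∀ k, c k * star (c k) = 1)
    (horth : ∀ k k', k ≠ k' → B k * X * (B k')ᴴ = 0) :
    (∑ k, c k • B k) * X * (∑ k, c k • B k)ᴴ = ∑ k, B k * X * (B k)ᴴ := by
  have hterm : ∀ k k', (c k • B k) * X * (c k' • B k')ᴴ
      = (c k * star (c k')) • (B k * X * (B k')ᴴ) := fun k k' => by
    rw [conjTranspose_smul, smul_mul, smul_mul, Matrix.mul_smul, smul_smul]
  simp only [conjTranspose_sum, Matrix.sum_mul, Matrix.mul_sum, hterm]
  refine Finset.sum_congr rfl fun k _ => ?_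
  rw [Fintype.sum_eq_single k fun k' hk'k => by rw [horth k' k hk'k, smul_zero],
    hc, one_smul]

theorem of_star_mul_mul_conjTranspose_of (X : Matrix n n R) (v w : m → n → R) :
    of (star v) * X * (of (star w))ᴴ = of fun j j' => star (v j) ⬝ᵥ X *ᵥ w j' := by
  ext j j'
  simp only [mul_apply, conjTranspose_apply, of_apply, Pi.star_apply, star_star, dotProduct,
    mulVec, Finset.sum_mul, Finset.mul_sum]
  rw [Finset.sum_comm]
  exact Finset.sum_congr rfl fun _ _ => Finset.sum_congr rfl fun _ _ => by ring

end Matrix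

theorem Complex.exp_mul_star_exp_of_re_eq_zero {z : ℂ} (hz : z.re = 0) :
    exp z * star (exp z) = 1 := by
  rw [star_def, mul_conj, normSq_eq_norm_sq, norm_exp, hz, Real.exp_zero, one_pow, ofReal_one]

theorem Mop_eq_smul_sum {s d : ℕ} (β : Fin s → Fin s → (Fin d → ℂ)) (t : Fin s) :
    Mop β t = (s : ℂ)⁻¹ • ∑ k : Fin s,
      exp (2 * (Real.pi : ℂ) * I * ((t : ℕ) : ℂ) * ((k : ℕ) : ℂ) / (s : ℂ)) •
        of (star (β k)) := by
  ext r a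
  simp [Mop, vecMulVec_apply, Matrix.sum_apply, Finset.sum_ite_eq]

theorem Mop_maximally_mixed_general (s d : ℕ)
    (X : Matrix (Fin d) (Fin d) ℂ)
    (β : Fin s → Fin s → (Fin d → ℂ)) (p : ℝ)
    (h1 : ∀ k k' : Fin s, k ≠ k' → ∀ j j' : Fin s,
      star (β k j) ⬝ᵥ X.mulVec (β k' j') = 0)
    (h2 : (Matrix.of fun j j' : Fin s => ∑ k : Fin s, star (β k j) ⬝ᵥ X.mulVec (β k j')) =
      (p : ℂ) • (1 : Matrix (Fin s) (Fin s) ℂ)) :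
    ∀ t : Fin s, Mop β t * X * (Mop β t)ᴴ =
      ((p : ℂ) / (s : ℂ) ^ 2) • (1 : Matrix (Fin s) (Fin s) ℂ) := by
  intro t
  have hphase : ∀ k : Fin s,
      exp (2 * (Real.pi : ℂ) * I * ((t : ℕ) : ℂ) * ((k : ℕ) : ℂ) / (s : ℂ)) *
        star (exp (2 * (Real.pi : ℂ) * I * ((t : ℕ) : ℂ) * ((k : ℕ) : ℂ) / (s : ℂ))) = 1 :=
    fun k => exp_mul_star_exp_of_re_eq_zero (by simp [div_re])
  have horth : ∀ k k' : Fin s, k ≠ k' → of (star (β k)) * X * (of (star (β k')))ᴴ = 0 := by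
    intro k k' hkk'
    ext j j'
    rw [of_star_mul_mul_conjTranspose_of, of_apply, h1 k k' hkk' j j', Matrix.zero_apply]
  have hdiag : ∑ k : Fin s, of (star (β k)) * X * (of (star (β k)))ᴴ = (p : ℂ) • 1 := by
    rw [← h2]
    ext j j'
    simp only [of_star_mul_mul_conjTranspose_of, Matrix.sum_apply, of_apply]
  rw [Mop_eq_smul_sum, conjTranspose_smul, smul_mul, smul_mul, Matrix.mul_smul, smul_smul,
    sum_smul_mul_mul_conjTranspose_sum_smul _ _ X hphase horth, hdiag, smul_smul]
  congr 1
  simp only [star_inv₀, star_natCast]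
  ring

/-- Equation (59) of the paper: under the orthogonality condition (i) and the
maximal-mixedness condition (ii), each measurement outcome M_t maps X to an operator
proportional to the maximally mixed state: M_t X M_t† = (p/s²)·I. -/
theorem Mop_maximally_mixed (s d : ℕ) (hs : 1 ≤ s) (hd : 1 ≤ d)
    (X : Matrix (Fin d) (Fin d) ℂ) (hX : X.PosSemidef)
    (β : Fin s → Fin s → (Fin d → ℂ)) (p : ℝ) (hp : 0 ≤ p)
    (h1 : ∀ k k' : Fin s, k ≠ k' → ∀ j j' : Fin s,
      star (β k j) ⬝ᵥ X.mulVec (β k' j') = 0)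
    (h2 : (Matrix.of fun j j' : Fin s => ∑ k : Fin s, star (β k j) ⬝ᵥ X.mulVec (β k j')) =
      (p : ℂ) • (1 : Matrix (Fin s) (Fin s) ℂ)) :
    ∀ t : Fin s, Mop β t * X * (Mop β t)ᴴ =
      ((p : ℂ) / (s : ℂ) ^ 2) • (1 : Matrix (Fin s) (Fin s) ℂ) :=
  Mop_maximally_mixed_general s d X β p h1 h2

end
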